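/- Let F = x_1x_2x_4 − x_1x_5² + x_2x_3² + x_3x_5x_6 + x_4x_6² ∈ k[x_1,...,x_6] over a field k of characteristic 0. Then the tuple (F, ∂F/∂x_1, ..., ∂F/∂x_6, x_1, ..., x_6, 1) is linearly independent over k and spans the image of the evaluation map ev_F : k[α_1,...,α_6] → k[x_1,...,x_6]; in particular the apolar algebra Apolar(F) = k[α]/F^⊥ has k-dimension 14. -/

import Mathlib

open MvPolynomial

/-- Composition of powers of the operators `op i`, with multiplicities given by `m`. -/
noncomputable def opPow {k : Type*} [CommSemiring k] {σ : Type*}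
    (op : σ → Module.End k (MvPolynomial σ k)) (m : σ →₀ ℕ) :
    Module.End k (MvPolynomial σ k) :=
  m.support.toList.foldr (fun i L => (op i) ^ (m i) * L) 1

/-- The action of a "differential polynomial" `h` on `F`, each variable of `h` acting by the
operator `op i`. -/
noncomputable def apAct {k : Type*} [CommSemiring k] {σ : Type*}
    (op : σ → Module.End k (MvPolynomial σ k)) (h F : MvPolynomial σ k) : MvPolynomial σ k :=
  h.support.sum fun m => (h.coeff m) • (opPow op m F)

/-- Apolarity contraction `h ∘ F`: each variable of `h` acts as the corresponding partial
derivative. -/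
noncomputable def apContract {k : Type*} [CommSemiring k] {σ : Type*} [DecidableEq σ]
    (h F : MvPolynomial σ k) : MvPolynomial σ k :=
  apAct (fun i => (pderiv i).toLinearMap) h F

/-!
The contraction `h ↦ h ∘ F` is evaluation of `h` at the pairwise commuting operators `∂ᵢ`, so
`F^⊥` is an ideal and `Apolar(F)` is isomorphic, as a `k`-vector space, to the space of all
`h ∘ F`. For a cubic `F` the span of `F`, its first partials, the variables and `1` is stable
under every `∂ᵢ` (second partials of a cubic are linear forms), so it contains every `h ∘ F`.
Conversely, for the explicit `F` every variable is a second partial of `F` and `1` is a third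
one. Finally, the fourteen polynomials are independent because contracting with
`α₁α₂α₄`, six quadratic monomials, the `αᵢ` and `1`, then evaluating at `0`, gives a dual family.
-/

theorem MvPolynomial.commute_pderiv {R σ : Type*} [CommRing R] [DecidableEq σ] (i j : σ) :
    Commute (pderiv i : Derivation R (MvPolynomial σ R) (MvPolynomial σ R)).toLinearMap
      (pderiv j).toLinearMap := by
  have hbracket :
      ⁅pderiv i, pderiv j⁆ = (0 : Derivation R (MvPolynomial σ R) (MvPolynomial σ R)) :=
    derivation_ext fun l => by
      rw [Derivation.commutator_apply, pderiv_X, pderiv_X]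
      simp [Pi.single_apply, apply_ite]
  refine LinearMap.ext fun p => ?_
  rw [Module.End.mul_apply, Module.End.mul_apply, ← sub_eq_zero]
  exact (Derivation.commutator_apply ..).symm.trans congr($hbracket p)

@[simp]
theorem MvPolynomial.pderiv_ofNat {R σ : Type*} [CommSemiring R] (i : σ) (n : ℕ) [n.AtLeastTwo] :
    pderiv i (ofNat(n) : MvPolynomial σ R) = 0 :=
  (pderiv i).map_natCast n

section CommutingOperators

variable {k σ A : Type*} [CommSemiring k] [Semiring A] [Algebra k A]

theorem isMulCommutative_adjoin_range {f : σ → A} (hf : ∀ i j, Commute (f i) (f j)) :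
    IsMulCommutative (Algebra.adjoin k (Set.range f)) :=
  Algebra.isMulCommutative_adjoin k (by rintro _ ⟨i, rfl⟩ _ ⟨j, rfl⟩; exact hf i j)

open scoped IsMulCommutative in
noncomputable def MvPolynomial.aevalOfCommute (f : σ → A) (hf : ∀ i j, Commute (f i) (f j)) :
    MvPolynomial σ k →ₐ[k] A :=
  haveI := isMulCommutative_adjoin_range (k := k) hf
  (Algebra.adjoin k (Set.range f)).val.comp
    (aeval fun i => ⟨f i, Algebra.subset_adjoin ⟨i, rfl⟩⟩)

theorem MvPolynomial.aevalOfCommute_X (f : σ → A) (hf : ∀ i j, Commute (f i) (f j)) (i : σ) :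
    aevalOfCommute f hf (X i : MvPolynomial σ k) = f i := by
  simp [aevalOfCommute]

variable {op : σ → Module.End k (MvPolynomial σ k)}

open scoped IsMulCommutative in
theorem opPow_eq_aevalOfCommute (hop : ∀ i j, Commute (op i) (op j)) (m : σ →₀ ℕ) :
    opPow op m = aevalOfCommute op hop (monomial m (1 : k)) := by
  have := isMulCommutative_adjoin_range (k := k) hop
  simp only [aevalOfCommute, AlgHom.comp_apply, aeval_monomial, map_one, one_mul, Finsupp.prod,
    opPow, ← Finset.prod_map_toList, Subalgebra.coe_val]
  induction m.support.toList <;> simp [*]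

theorem apAct_eq_aevalOfCommute (hop : ∀ i j, Commute (op i) (op j)) (h F : MvPolynomial σ k) :
    apAct op h F = aevalOfCommute op hop h F := by
  conv_rhs => rw [h.as_sum]
  simp only [apAct, map_sum, LinearMap.sum_apply, opPow_eq_aevalOfCommute hop]
  refine Finset.sum_congr rfl fun m _ => ?_
  rw [← mul_one (coeff m h), ← smul_eq_mul, ← smul_monomial, map_smul, smul_eq_mul, mul_one]
  rfl

end CommutingOperators

section Contraction

variable {k σ : Type*} [CommRing k] [DecidableEq σ]

noncomputable def pderivAlgHom : MvPolynomial σ k →ₐ[k] Module.End k (MvPolynomial σ k) :=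
  aevalOfCommute _ commute_pderiv

theorem apContract_eq_pderivAlgHom (h F : MvPolynomial σ k) :
    apContract h F = pderivAlgHom h F :=
  apAct_eq_aevalOfCommute _ h F

theorem apContract_mul (g h F : MvPolynomial σ k) :
    apContract (g * h) F = apContract g (apContract h F) := by
  simp [apContract_eq_pderivAlgHom]

theorem apContract_X (i : σ) (F : MvPolynomial σ k) : apContract (X i) F = pderiv i F := by
  rw [apContract_eq_pderivAlgHom, pderivAlgHom, aevalOfCommute_X]
  rfl

theorem apContract_C (c : k) (F : MvPolynomial σ k) : apContract (C c) F = c • F := by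
  simp [apContract_eq_pderivAlgHom, Algebra.algebraMap_eq_smul_one]

theorem apContract_one (F : MvPolynomial σ k) : apContract 1 F = F := by
  simpa using apContract_C 1 F

theorem apContract_zero (h : MvPolynomial σ k) : apContract h 0 = 0 := by
  simp [apContract_eq_pderivAlgHom]

/-- The evaluation map `ev_F`. -/
noncomputable def apContractₗ (F : MvPolynomial σ k) : MvPolynomial σ k →ₗ[k] MvPolynomial σ k :=
  LinearMap.applyₗ F ∘ₗ pderivAlgHom.toLinearMap

theorem apContractₗ_apply (F h : MvPolynomial σ k) : apContractₗ F h = apContract h F := by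
  simp [apContractₗ, apContract_eq_pderivAlgHom]

def perpIdeal (F : MvPolynomial σ k) : Ideal (MvPolynomial σ k) where
  carrier := {h | apContract h F = 0}
  add_mem' {g h} hg hh := by simp_all [← apContractₗ_apply]
  zero_mem' := by simp [← apContractₗ_apply]
  smul_mem' g h hh := by simp_all [apContract_mul, apContract_zero]

theorem finrank_quotient_perp {k : Type*} [Field k] (F : MvPolynomial σ k) :
    Module.finrank k (MvPolynomial σ k ⧸ Ideal.span {h : MvPolynomial σ k | apContract h F = 0})
      = Module.finrank k (LinearMap.range (apContractₗ F)) := by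
  have hker : (perpIdeal F).restrictScalars k = LinearMap.ker (apContractₗ F) := by
    ext h
    simp [apContractₗ_apply, perpIdeal]
  rw [show Ideal.span {h | apContract h F = 0} = perpIdeal F from Ideal.span_eq (perpIdeal F),
    ← (Submodule.Quotient.restrictScalarsEquiv k (perpIdeal F)).finrank_eq, hker,
    (apContractₗ F).quotKerEquivRange.finrank_eq]

theorem apContract_mem_of_pderiv_mem {W : Submodule k (MvPolynomial σ k)}
    (hW : ∀ i, ∀ p ∈ W, pderiv i p ∈ W) (h : MvPolynomial σ k) {F : MvPolynomial σ k}
    (hF : F ∈ W) : apContract h F ∈ W := by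
  induction h using MvPolynomial.induction_on generalizing F with
  | C c => rw [apContract_C]; exact W.smul_mem c hF
  | add p q hp hq =>
    rw [← apContractₗ_apply, map_add]
    simpa only [apContractₗ_apply] using W.add_mem (hp hF) (hq hF)
  | mul_X p i ih => rw [apContract_mul, apContract_X]; exact ih (hW i F hF)

end Contraction

section ApolarFamily

variable {k σ : Type*} [CommRing k]

noncomputable def apolarFamily (F : MvPolynomial σ k) : Unit ⊕ σ ⊕ σ ⊕ Unit → MvPolynomial σ k :=
  Sum.elim (fun _ => F) (Sum.elim (fun i => pderiv i F) (Sum.elim (fun i => X i) (fun _ => 1)))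

theorem pderiv_mem_span_apolarFamily {F : MvPolynomial σ k} (hF : F.IsHomogeneous 3) (i : σ)
    {p : MvPolynomial σ k} (hp : p ∈ Submodule.span k (Set.range (apolarFamily F))) :
    pderiv i p ∈ Submodule.span k (Set.range (apolarFamily F)) := by
  induction hp using Submodule.span_induction with
  | mem _ hx =>
    obtain ⟨j | j | j | _, rfl⟩ := hx
    · exact Submodule.subset_span ⟨.inr (.inl i), rfl⟩
    · have hlin : pderiv i (pderiv j F) ∈ homogeneousSubmodule σ k 1 := hF.pderiv.pderiv
      rw [homogeneousSubmodule_one_eq_span_X] at hlin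
      have hX : Set.range (X : σ → MvPolynomial σ k) ⊆ Set.range (apolarFamily F) :=
        Set.range_subset_iff.2 fun l => ⟨.inr (.inr (.inl l)), rfl⟩
      exact Submodule.span_mono hX hlin
    · rcases eq_or_ne j i with rfl | hji
      · exact Submodule.subset_span ⟨.inr (.inr (.inr ())), (pderiv_X_self j).symm⟩
      · rw [apolarFamily, Sum.elim_inr, Sum.elim_inr, Sum.elim_inl, pderiv_X_of_ne hji]
        exact Submodule.zero_mem _
    · rw [apolarFamily, Sum.elim_inr, Sum.elim_inr, Sum.elim_inr, pderiv_one]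
      exact Submodule.zero_mem _
  | zero => rw [map_zero]; exact Submodule.zero_mem _
  | add p q _ _ hp hq => rw [map_add]; exact Submodule.add_mem _ hp hq
  | smul c p _ hp => rw [(pderiv i).map_smul]; exact Submodule.smul_mem _ c hp

theorem span_apolarFamily_eq_range_apContractₗ [DecidableEq σ] {F : MvPolynomial σ k}
    (hF : F.IsHomogeneous 3) (hX : ∀ l, X l ∈ LinearMap.range (apContractₗ F))
    (h1 : 1 ∈ LinearMap.range (apContractₗ F)) :
    Submodule.span k (Set.range (apolarFamily F)) = LinearMap.range (apContractₗ F) := by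
  refine le_antisymm (Submodule.span_le.2 (Set.range_subset_iff.2 ?_)) ?_
  · rintro (_ | i | l | _)
    · exact ⟨1, by rw [apContractₗ_apply, apContract_one]; rfl⟩
    · exact ⟨X i, by rw [apContractₗ_apply, apContract_X]; rfl⟩
    · exact hX l
    · exact h1
  · rintro _ ⟨h, rfl⟩
    rw [apContractₗ_apply]
    exact apContract_mem_of_pderiv_mem (fun i _ => pderiv_mem_span_apolarFamily hF i) h
      (Submodule.subset_span ⟨.inl (), rfl⟩)

end ApolarFamily

theorem linearIndependent_of_biorthogonal {R M ι : Type*} [CommRing R] [AddCommGroup M]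
    [Module R M] [Finite ι] [DecidableEq ι] {v : ι → M} (φ : ι → M →ₗ[R] R)
    (hφ : ∀ i j, φ i (v j) = if i = j then 1 else 0) : LinearIndependent R v := by
  have hpi : LinearMap.pi φ ∘ v = Pi.basisFun R ι := by
    ext j i
    simp [hφ, Pi.single_apply, eq_comm]
  exact LinearIndependent.of_comp _ (hpi ▸ (Pi.basisFun R ι).linearIndependent)

section ExplicitCubic

variable (k : Type*) [CommRing k]

noncomputable def explicitCubic : MvPolynomial (Fin 6) k :=
  X 0 * X 1 * X 3 - X 0 * X 4 ^ 2 + X 1 * X 2 ^ 2 + X 2 * X 4 * X 5 + X 3 * X 5 ^ 2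

theorem isHomogeneous_explicitCubic : (explicitCubic k).IsHomogeneous 3 := by
  have h1 : ∀ i, (X i : MvPolynomial (Fin 6) k).IsHomogeneous 1 := isHomogeneous_X k
  exact ((((((h1 0).mul (h1 1)).mul (h1 3)).sub ((h1 0).mul ((h1 4).pow 2))).add
    ((h1 1).mul ((h1 2).pow 2))).add (((h1 2).mul (h1 4)).mul (h1 5))).add
    ((h1 3).mul ((h1 5).pow 2))

theorem constantCoeff_explicitCubic : constantCoeff (explicitCubic k) = 0 := by
  simp [explicitCubic]

theorem pderiv_explicitCubic (i : Fin 6) :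
    pderiv i (explicitCubic k) = ![X 1 * X 3 - X 4 ^ 2, X 0 * X 3 + X 2 ^ 2,
      2 * X 1 * X 2 + X 4 * X 5, X 0 * X 1 + X 5 ^ 2, -(2 * X 0 * X 4) + X 2 * X 5,
      X 2 * X 4 + 2 * X 3 * X 5] i := by
  fin_cases i <;> simp [explicitCubic, pow_two] <;> ring

/-- For each `i`, a monomial of `∂F/∂xᵢ` occurring with coefficient `1` and in no other
`∂F/∂xⱼ`. -/
noncomputable def dualQuadric : Fin 6 → MvPolynomial (Fin 6) k :=
  ![X 1 * X 3, X 0 * X 3, X 4 * X 5, X 0 * X 1, X 2 * X 5, X 2 * X 4]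

theorem apContract_dualQuadric (l : Fin 6) :
    apContract (dualQuadric k l) (explicitCubic k) = X l := by
  fin_cases l <;> simp [dualQuadric, apContract_mul, apContract_X, pderiv_explicitCubic, pow_two]

theorem apContract_explicitCubic_eq_one :
    apContract (X 0 * X 1 * X 3) (explicitCubic k) = 1 := by
  simp [apContract_mul, apContract_X, pderiv_explicitCubic, pow_two]

noncomputable def explicitProbe : Unit ⊕ Fin 6 ⊕ Fin 6 ⊕ Unit → MvPolynomial (Fin 6) k :=
  Sum.elim (fun _ => X 0 * X 1 * X 3) (Sum.elim (dualQuadric k) (Sum.elim X (fun _ => 1)))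

theorem constantCoeff_apContract_explicitProbe (i j : Unit ⊕ Fin 6 ⊕ Fin 6 ⊕ Unit) :
    constantCoeff (apContract (explicitProbe k i) (apolarFamily (explicitCubic k) j))
      = if i = j then 1 else 0 := by
  rcases i with _ | i | i | _ <;> rcases j with _ | j | j | _ <;> (try fin_cases i) <;>
    (try fin_cases j) <;>
    simp [explicitProbe, dualQuadric, apolarFamily, pderiv_explicitCubic, apContract_mul,
      apContract_X, apContract_one, pow_two, constantCoeff_explicitCubic]

theorem linearIndependent_apolarFamily_explicitCubic :
    LinearIndependent k (apolarFamily (explicitCubic k)) :=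
  linearIndependent_of_biorthogonal
    (fun i => (lcoeff k 0).comp (pderivAlgHom (explicitProbe k i))) fun i j => by
      rw [LinearMap.comp_apply, lcoeff_apply, ← constantCoeff_eq, ← apContract_eq_pderivAlgHom]
      exact constantCoeff_apContract_explicitProbe k i j

theorem span_apolarFamily_explicitCubic :
    Submodule.span k (Set.range (apolarFamily (explicitCubic k)))
      = LinearMap.range (apContractₗ (explicitCubic k)) :=
  span_apolarFamily_eq_range_apContractₗ (isHomogeneous_explicitCubic k)
    (fun l => ⟨dualQuadric k l, by rw [apContractₗ_apply, apContract_dualQuadric]⟩)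
    ⟨X 0 * X 1 * X 3, by rw [apContractₗ_apply, apContract_explicitCubic_eq_one]⟩

end ExplicitCubic

theorem explicit_cubic_apolar_dim_fourteen_general {k : Type*} [Field k]
    (F : MvPolynomial (Fin 6) k)
    (hFdef : F = X 0 * X 1 * X 3 - X 0 * X 4 ^ 2 + X 1 * X 2 ^ 2
      + X 2 * X 4 * X 5 + X 3 * X 5 ^ 2)
    (v : Unit ⊕ Fin 6 ⊕ Fin 6 ⊕ Unit → MvPolynomial (Fin 6) k)
    (hv : v = Sum.elim (fun _ => F) (Sum.elim (fun i => pderiv i F)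
      (Sum.elim (fun i => X i) (fun _ => 1)))) :
    LinearIndependent k v
      ∧ (Submodule.span k (Set.range v) : Set (MvPolynomial (Fin 6) k))
          = Set.range (fun h => apContract h F)
      ∧ Module.finrank k
          (MvPolynomial (Fin 6) k ⧸
            Ideal.span {h : MvPolynomial (Fin 6) k | apContract h F = 0}) = 14 := by
  obtain rfl : v = apolarFamily F := hv
  obtain rfl : F = explicitCubic k := hFdef
  have hind := linearIndependent_apolarFamily_explicitCubic k
  have hspan := span_apolarFamily_explicitCubic k
  refine ⟨hind, ?_, ?_⟩
  · rw [hspan, LinearMap.coe_range]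
    exact congrArg Set.range (funext (apContractₗ_apply _))
  · rw [finrank_quotient_perp, ← hspan, finrank_span_eq_card hind]
    simp

/-- For the explicit cubic `F = x_1x_2x_4 − x_1x_5² + x_2x_3² + x_3x_5x_6 + x_4x_6²`
(variables indexed by `Fin 6`, so `x_{i+1} = X i`), the tuple
`(F, ∂F/∂x_1, …, ∂F/∂x_6, x_1, …, x_6, 1)` is linearly independent over `k` and spans the
image of the evaluation map `ev_F : h ↦ h ∘ F`; in particular the apolar algebra
`Apolar(F) = k[α]/F^⊥` has `k`-dimension 14. -/
theorem explicit_cubic_apolar_dim_fourteen {k : Type*} [Field k] [CharZero k]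
    (F : MvPolynomial (Fin 6) k)
    (hFdef : F = X 0 * X 1 * X 3 - X 0 * X 4 ^ 2 + X 1 * X 2 ^ 2
      + X 2 * X 4 * X 5 + X 3 * X 5 ^ 2)
    (v : Unit ⊕ Fin 6 ⊕ Fin 6 ⊕ Unit → MvPolynomial (Fin 6) k)
    (hv : v = Sum.elim (fun _ => F) (Sum.elim (fun i => pderiv i F)
      (Sum.elim (fun i => X i) (fun _ => 1)))) :
    LinearIndependent k v
      ∧ (Submodule.span k (Set.range v) : Set (MvPolynomial (Fin 6) k))
          = Set.range (fun h => apContract h F)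
      ∧ Module.finrank k
          (MvPolynomial (Fin 6) k ⧸
            Ideal.span {h : MvPolynomial (Fin 6) k | apContract h F = 0}) = 14 :=
  explicit_cubic_apolar_dim_fourteen_general F hFdef v hv
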